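/- Let f : [a,b] → ℝ be uniformly convex with increasing modulus Φ : [0,b−a] → ℝ₊, Φ(0) = 0. Let x₁ ≤ x₂ ≤ ... ≤ xₙ ∈ [a,b] and p a probability vector. Then ∑_{k=1}^n pₖ f(xₖ) − f(∑pₖxₖ) ≥ ∑_{k=1}^{n−1} pₖ p_{k+1} Φ(x_{k+1} − xₖ). -/

import Mathlib

/-!
Induction on the number of points. Write the distribution on `x₀ ≤ … ≤ xₘ` as a mixture, with
weights `s = p₀ + … + pₘ₋₁` and `pₘ = 1 - s`, of the renormalised distribution on the first `m`
points (mean `y ≤ xₘ₋₁`) and the point mass at `xₘ`. The Jensen gap splits into `s` times the gap of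
the renormalised distribution plus the two-point gap between `y` and `xₘ`. The first is bounded by
induction; renormalising only enlarges the products `pₖ pₖ₊₁` since `s ≤ 1`. The second is at least
`s pₘ Φ(xₘ - y) ≥ pₘ₋₁ pₘ Φ(xₘ - xₘ₋₁)`, because `pₘ₋₁ ≤ s` and `Φ` is increasing.
-/

open Finset Set

def UniformlyConvexOnWith (a b : ℝ) (f Φ : ℝ → ℝ) : Prop :=
  ∀ x ∈ Icc a b, ∀ y ∈ Icc a b, ∀ t ∈ Icc (0 : ℝ) 1,
    t * f x + (1 - t) * f y ≥ f (t * x + (1 - t) * y) + t * (1 - t) * Φ |x - y|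

noncomputable def jensenGap (f : ℝ → ℝ) (p x : ℕ → ℝ) (n : ℕ) : ℝ :=
  ∑ k ∈ range n, p k * f (x k) - f (∑ k ∈ range n, p k * x k)

noncomputable def adjacentSum (Φ : ℝ → ℝ) (p x : ℕ → ℝ) (n : ℕ) : ℝ :=
  ∑ k ∈ range (n - 1), p k * p (k + 1) * Φ (x (k + 1) - x k)

section

variable {a b : ℝ} {f Φ : ℝ → ℝ} {p x : ℕ → ℝ} {m : ℕ}

theorem sum_mul_mem_Icc {n : ℕ} {c d : ℝ} (hp : ∀ i < n, 0 ≤ p i)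
    (hp1 : ∑ i ∈ range n, p i = 1) (hx : ∀ i < n, x i ∈ Icc c d) :
    ∑ i ∈ range n, p i * x i ∈ Icc c d :=
  (convex_Icc c d).sum_mem (fun i hi => hp i (mem_range.1 hi)) hp1
    (fun i hi => hx i (mem_range.1 hi))

theorem sub_mem_Icc_zero_sub {u v : ℝ} (hu : u ∈ Icc a b) (hv : v ∈ Icc a b) (huv : u ≤ v) :
    v - u ∈ Icc 0 (b - a) :=
  ⟨sub_nonneg.2 huv, by linarith [hu.1, hv.2]⟩

theorem adjacentSum_add_two :
    adjacentSum Φ p x (m + 2) =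
      adjacentSum Φ p x (m + 1) + p m * p (m + 1) * Φ (x (m + 1) - x m) :=
  sum_range_succ _ _

theorem jensenGap_succ_eq {s : ℝ} (hs0 : s ≠ 0) :
    jensenGap f p x (m + 1) =
      s * jensenGap f (fun k => p k / s) x m +
        (s * f (∑ k ∈ range m, p k / s * x k) + p m * f (x m) -
          f (s * ∑ k ∈ range m, p k / s * x k + p m * x m)) := by
  have hscale (g : ℕ → ℝ) : s * ∑ k ∈ range m, p k / s * g k = ∑ k ∈ range m, p k * g k := by
    rw [mul_sum]
    exact sum_congr rfl fun k _ => by field_simp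
  simp only [jensenGap, sum_range_succ, mul_sub, hscale]
  ring

theorem adjacentSum_le_mul_adjacentSum_div {s : ℝ} (hs0 : 0 < s) (hs1 : s ≤ 1)
    (hp : ∀ i < m, 0 ≤ p i) (hΦ : ∀ k < m - 1, 0 ≤ Φ (x (k + 1) - x k)) :
    adjacentSum Φ p x m ≤ s * adjacentSum Φ (fun k => p k / s) x m := by
  rw [adjacentSum, adjacentSum, mul_sum]
  refine sum_le_sum fun k hk => ?_
  have hk : k < m - 1 := mem_range.1 hk
  have hterm : 0 ≤ p k * p (k + 1) * Φ (x (k + 1) - x k) :=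
    mul_nonneg (mul_nonneg (hp k (by omega)) (hp (k + 1) (by omega))) (hΦ k hk)
  calc p k * p (k + 1) * Φ (x (k + 1) - x k)
      ≤ p k * p (k + 1) * Φ (x (k + 1) - x k) / s := le_div_self hterm hs0 hs1
    _ = s * (p k / s * (p (k + 1) / s) * Φ (x (k + 1) - x k)) := by field_simp

theorem adjacentSum_le_jensenGap_of_prefix_sum_eq_zero (hp : ∀ i < m + 1, 0 ≤ p i)
    (hp1 : ∑ i ∈ range (m + 1), p i = 1) (hs : ∑ i ∈ range m, p i = 0) :
    adjacentSum Φ p x (m + 1) ≤ jensenGap f p x (m + 1) := by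
  have hprefix : ∀ k ∈ range m, p k = 0 :=
    (sum_eq_zero_iff_of_nonneg fun k hk => hp k (by simp at hk; omega)).1 hs
  have hpm : p m = 1 := by rwa [sum_range_succ, hs, zero_add] at hp1
  have hzero (g : ℕ → ℝ) : ∑ k ∈ range m, p k * g k = 0 :=
    sum_eq_zero fun k hk => by rw [hprefix k hk, zero_mul]
  have hgap : jensenGap f p x (m + 1) = 0 := by
    simp only [jensenGap, sum_range_succ, hzero, hpm, zero_add, one_mul, sub_self]
  have hadj : adjacentSum Φ p x (m + 1) = 0 := by
    simp only [adjacentSum, Nat.add_sub_cancel, mul_assoc, hzero]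
  rw [hgap, hadj]

theorem adjacentSum_le_jensenGap_of_prefix_pos (huc : UniformlyConvexOnWith a b f Φ)
    (hΦpos : ∀ t ∈ Icc 0 (b - a), 0 ≤ Φ t) (hΦmono : MonotoneOn Φ (Icc 0 (b - a)))
    (hx : ∀ i < m + 1, x i ∈ Icc a b) (hmono : ∀ i j, i ≤ j → j < m + 1 → x i ≤ x j)
    (hp : ∀ i < m + 1, 0 ≤ p i) (hp1 : ∑ i ∈ range (m + 1), p i = 1)
    (hs : 0 < ∑ i ∈ range m, p i)
    (ih : ∀ q : ℕ → ℝ, (∀ i < m, 0 ≤ q i) → ∑ i ∈ range m, q i = 1 →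
      adjacentSum Φ q x m ≤ jensenGap f q x m) :
    adjacentSum Φ p x (m + 1) ≤ jensenGap f p x (m + 1) := by
  obtain ⟨m, rfl⟩ : ∃ m', m = m' + 1 :=
    Nat.exists_eq_add_one.2 (Nat.pos_of_ne_zero (by rintro rfl; simp at hs))
  rw [adjacentSum_add_two, jensenGap_succ_eq hs.ne']
  set s := ∑ i ∈ range (m + 1), p i
  set q : ℕ → ℝ := fun k => p k / s
  set y := ∑ k ∈ range (m + 1), q k * x k
  have hplast : p (m + 1) = 1 - s := by rw [sum_range_succ] at hp1; linarith
  have hs1 : s ≤ 1 := by linarith [hp (m + 1) (by omega)]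
  have hq : ∀ i < m + 1, 0 ≤ q i := fun i hi => div_nonneg (hp i (by omega)) hs.le
  have hq1 : ∑ i ∈ range (m + 1), q i = 1 := by rw [← sum_div, div_self hs.ne']
  have hxm : x m ∈ Icc a b := hx m (by omega)
  have hxlast : x (m + 1) ∈ Icc a b := hx (m + 1) (by omega)
  have hlast : x m ≤ x (m + 1) := hmono m (m + 1) (by omega) (by omega)
  have hy : y ∈ Icc a (x m) := sum_mul_mem_Icc hq hq1 fun i hi =>
    ⟨(hx i (by omega)).1, hmono i m (by omega) (by omega)⟩
  have hy' : y ∈ Icc a b := ⟨hy.1, hy.2.trans hxm.2⟩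
  have htwo := huc y hy' (x (m + 1)) hxlast s ⟨hs.le, hs1⟩
  rw [← hplast, abs_sub_comm, abs_of_nonneg (by linarith [hy.2])] at htwo
  have hΦlast : p m * Φ (x (m + 1) - x m) ≤ s * Φ (x (m + 1) - y) := by
    have hmem := sub_mem_Icc_zero_sub hxm hxlast hlast
    have hmem' := sub_mem_Icc_zero_sub hy' hxlast (hy.2.trans hlast)
    have hpm_le : p m ≤ s :=
      single_le_sum (fun i hi => hp i (by simp at hi; omega)) (mem_range.2 (by omega))
    exact mul_le_mul hpm_le (hΦmono hmem hmem' (by linarith [hy.2])) (hΦpos _ hmem) hs.le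
  have hadj := adjacentSum_le_mul_adjacentSum_div (m := m + 1) hs hs1
    (fun i hi => hp i (by omega)) fun k hk => hΦpos _ (sub_mem_Icc_zero_sub (hx k (by omega)) (hx (k + 1) (by omega))
      (hmono k (k + 1) (by omega) (by omega)))
  have hind := mul_le_mul_of_nonneg_left (ih q hq hq1) hs.le
  have hΦlast' := mul_le_mul_of_nonneg_left hΦlast (hp (m + 1) (by omega))
  linarith

end

theorem stmt7_general {a b : ℝ} {f Φ : ℝ → ℝ}
    (hΦpos : ∀ t ∈ Set.Icc 0 (b - a), 0 ≤ Φ t)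
    (hΦmono : MonotoneOn Φ (Set.Icc 0 (b - a)))
    (huc : ∀ x ∈ Set.Icc a b, ∀ y ∈ Set.Icc a b, ∀ t ∈ Set.Icc (0 : ℝ) 1,
      t * f x + (1 - t) * f y ≥ f (t * x + (1 - t) * y) + t * (1 - t) * Φ |x - y|)
    {n : ℕ} (x : ℕ → ℝ) (hx : ∀ i < n, x i ∈ Set.Icc a b)
    (hmono : ∀ i j, i ≤ j → j < n → x i ≤ x j)
    (p : ℕ → ℝ) (hp : ∀ i < n, 0 ≤ p i) (hp1 : ∑ i ∈ Finset.range n, p i = 1) :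
    ∑ k ∈ Finset.range n, p k * f (x k) - f (∑ k ∈ Finset.range n, p k * x k) ≥
      ∑ k ∈ Finset.range (n - 1), p k * p (k + 1) * Φ (x (k + 1) - x k) := by
  show adjacentSum Φ p x n ≤ jensenGap f p x n
  induction n generalizing p with
  | zero => simp at hp1
  | succ m ih =>
    have ih' (q : ℕ → ℝ) (hq : ∀ i < m, 0 ≤ q i) (hq1 : ∑ i ∈ range m, q i = 1) :
        adjacentSum Φ q x m ≤ jensenGap f q x m :=
      ih (fun i hi => hx i (by omega)) (fun i j hij hj => hmono i j hij (by omega)) q hq hq1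
    rcases (sum_nonneg fun i hi => hp i (by simp at hi; omega) :
      0 ≤ ∑ i ∈ range m, p i).eq_or_lt with hs | hs
    · exact adjacentSum_le_jensenGap_of_prefix_sum_eq_zero hp hp1 hs.symm
    · exact adjacentSum_le_jensenGap_of_prefix_pos huc hΦpos hΦmono hx hmono hp hp1 hs ih'

theorem stmt7 {a b : ℝ} (hab : a ≤ b) {f Φ : ℝ → ℝ}
    (hΦ0 : Φ 0 = 0) (hΦpos : ∀ t ∈ Set.Icc 0 (b - a), 0 ≤ Φ t)
    (hΦmono : MonotoneOn Φ (Set.Icc 0 (b - a)))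
    (huc : ∀ x ∈ Set.Icc a b, ∀ y ∈ Set.Icc a b, ∀ t ∈ Set.Icc (0 : ℝ) 1,
      t * f x + (1 - t) * f y ≥ f (t * x + (1 - t) * y) + t * (1 - t) * Φ |x - y|)
    {n : ℕ} (hn : 0 < n) (x : ℕ → ℝ) (hx : ∀ i < n, x i ∈ Set.Icc a b)
    (hmono : ∀ i j, i ≤ j → j < n → x i ≤ x j)
    (p : ℕ → ℝ) (hp : ∀ i < n, 0 ≤ p i) (hp1 : ∑ i ∈ Finset.range n, p i = 1) :
    ∑ k ∈ Finset.range n, p k * f (x k) - f (∑ k ∈ Finset.range n, p k * x k) ≥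
      ∑ k ∈ Finset.range (n - 1), p k * p (k + 1) * Φ (x (k + 1) - x k) :=
  stmt7_general hΦpos hΦmono huc x hx hmono p hp hp1
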